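/- arXiv:2511.23255 — 3 statements merged into one kernel-verified Lean document; each statement's English description precedes it below -/
import Mathlib

section
/- Let $R$ be a commutative $\mathbb{Q}$-algebra, and let $A, B \in R\langle\langle e_0,e_1\rangle\rangle$ with $A_{e_0^n} = B_{e_0^n} = 0$ for all $n \ge 1$ and $B_\emptyset = 0$ (the constant coefficient of $B$ vanishes). Let $A(e_0, B)$ denote the series obtained by substituting $B$ for each occurrence of $e_1$ in $A$. Then for every word $w$ on $\{e_0, e_1\}$ containing at least one $e_1$, the coefficient satisfies $A(e_0,B)_w = \sum \big(\prod_{i=1}^r B_{w_i}\big) A_{w/(w_i)_i}$, where the sum is over all $r \ge 1$ and all $e_1$-segments $(w_1,\dots,w_r)$ of $w$, i.e. all factorizations $w = a_0 w_1 a_1 \cdots a_{r-1} w_r a_r$ with each $a_j$ a (possibly empty) power of $e_0$ and each $w_i$ a word containing at least one $e_1$, and $w/(w_i)_i = a_0 e_1 a_1 \cdots a_{r-1} e_1 a_r$ is the contraction replacing each $w_i$ by $e_1$. -/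
open scoped Classical

/-- `mCoeff B u w` is the coefficient of the word `w` in the noncommutative monomial
obtained from the word `u` by substituting the series `B` for each letter `e₁ = true`
(the letter `e₀ = false` is kept). -/
def mCoeff {R : Type*} [CommRing R] (B : List Bool → R) : List Bool → List Bool → R
  | [], w => if w = [] then 1 else 0
  | false :: u, false :: w' => mCoeff B u w'
  | false :: _, _ => 0
  | true :: u, w =>
      ∑ i ∈ Finset.range (w.length + 1), B (w.take i) * mCoeff B u (w.drop i)

/-- `substCoeff A B w` is the coefficient of `w` in the series `A(e₀, B)` obtained by
substituting `B` for each occurrence of `e₁` in `A`.  Since `B` has zero constant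
term, only words `u` of length at most `|w|` contribute, so the sum is finite. -/
noncomputable def substCoeff {R : Type*} [CommRing R] (A B : List Bool → R)
    (w : List Bool) : R :=
  ∑ n ∈ Finset.range (w.length + 1),
    ∑ f : Fin n → Bool, A (List.ofFn f) * mCoeff B (List.ofFn f) w

/-- Given a word `w` and monotone cut data `b`, `segPart w b k` is the `k`-th part of
the factorization of `w` determined by the cut points `b`. -/
def segPart (w : List Bool) {m : ℕ} (b : Fin (m + 1) → Fin (w.length + 1)) (k : Fin m) :
    List Bool :=
  (w.take (b k.succ : ℕ)).drop (b k.castSucc : ℕ)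

/-!
Expanding the monomial `u(e₀, B)` letter by letter writes `A(e₀, B)_w` as a sum, over words `u`
and chunkings of `w` into consecutive pieces (one per letter of `u`), of `A_u` times the product of
`B` over the pieces of the letters `e₁`; each letter `e₀` must match a single letter `e₀` of `w`.
Since `B` vanishes on `e₁`-free words, only chunkings whose `e₁`-pieces contain an `e₁` survive.
Merging every maximal run of `e₀`-pieces into one block turns such a chunking into an
`e₁`-segmentation `w = a₀ w₁ a₁ ⋯ w_r a_r` whose contraction is `u`; this is a bijection, and it
carries the summand `A_u ∏ B_{piece}` to `(∏ᵢ B_{wᵢ}) A_{w/(wᵢ)ᵢ}`. The cut points `b` of the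
statement are the partial sums of the part lengths `|a₀|, |w₁|, …, |w_r|, |a_r|`.
-/

open Finset

theorem Finset.Nat.sum_antidiagonalTuple_succ {M : Type*} [AddCommMonoid M] (k n : ℕ)
    (f : (Fin (k + 1) → ℕ) → M) :
    ∑ x ∈ Nat.antidiagonalTuple (k + 1) n, f x =
      ∑ p ∈ antidiagonal n, ∑ x ∈ Nat.antidiagonalTuple k p.2, f (Fin.cons p.1 x) := by
  change (Multiset.map f ((List.Nat.antidiagonalTuple (k + 1) n : List _) : Multiset _)).sum =
    (Multiset.map _ ((List.Nat.antidiagonal n : List (ℕ × ℕ)) : Multiset (ℕ × ℕ))).sum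
  simp only [List.Nat.antidiagonalTuple, Multiset.map_coe, Multiset.sum_coe, List.flatMap_def,
    List.map_flatten, List.map_map, List.sum_flatten]
  congr 2
  ext p
  simp [Finset.sum, Nat.antidiagonalTuple, Multiset.Nat.antidiagonalTuple]
  rfl

namespace SubstCoeff

variable {R : Type*} [CommRing R]

/-- The part of `mCoeff B u w` in which the `i`-th letter of `u` produces the `i`-th chunk of `w`,
of length `d[i]`. -/
def cutCoeff (B : List Bool → R) : List Bool → List ℕ → List Bool → R
  | [], [], [] => 1
  | false :: u, 1 :: d, false :: w => cutCoeff B u d w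
  | true :: u, a :: d, w => B (w.take a) * cutCoeff B u d (w.drop a)
  | _, _, _ => 0

theorem mCoeff_eq_sum_cutCoeff (B : List Bool → R) {u : List Bool} {n : ℕ} (hu : u.length = n)
    (w : List Bool) :
    mCoeff B u w = ∑ d ∈ Nat.antidiagonalTuple n w.length, cutCoeff B u (List.ofFn d) w := by
  subst hu
  induction u generalizing w with
  | nil => cases w <;> simp [mCoeff, cutCoeff]
  | cons x u ih =>
    rw [List.length_cons, Nat.sum_antidiagonalTuple_succ, Nat.sum_antidiagonal_eq_sum_range_succ_mk]
    cases x with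
    | true =>
      simp only [mCoeff, ih, mul_sum, List.ofFn_succ, Fin.cons_zero, Fin.cons_succ, cutCoeff,
        List.length_drop]
    | false =>
      rcases w with _ | ⟨c, w⟩
      · simp [mCoeff, cutCoeff]
      · rw [List.length_cons, sum_range_succ', sum_range_succ']
        cases c <;> simp [mCoeff, cutCoeff, ih]

inductive IsChunking : List Bool → List ℕ → List Bool → Prop
  | nil : IsChunking [] [] []
  | false_cons {u d w} : IsChunking u d w → IsChunking (false :: u) (1 :: d) (false :: w)
  | true_cons {u d w} (v : List Bool) : true ∈ v → IsChunking u d w →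
      IsChunking (true :: u) (v.length :: d) (v ++ w)

theorem isChunking_of_cutCoeff_ne_zero {B : List Bool → R} (hB : ∀ v, true ∉ v → B v = 0)
    {u : List Bool} {d : List ℕ} {w : List Bool} (hsum : d.sum = w.length)
    (h : cutCoeff B u d w ≠ 0) : IsChunking u d w := by
  induction u generalizing d w with
  | nil =>
    rcases d with _ | ⟨_, _⟩ <;> rcases w with _ | ⟨_, _⟩ <;> simp_all [cutCoeff, IsChunking.nil]
  | cons x u ih =>
    rcases d with _ | ⟨a, d⟩
    · cases x <;> simp [cutCoeff] at h
    cases x with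
    | false =>
      rcases w with _ | ⟨_ | _, w⟩ <;> rcases a with _ | _ | a <;> simp [cutCoeff] at h
      exact .false_cons (ih (by simpa [add_comm] using hsum) h)
    | true =>
      have ha : a ≤ w.length := by simp at hsum; omega
      rw [cutCoeff] at h
      have hv : true ∈ w.take a := by_contra fun hv => left_ne_zero_of_mul h (hB _ hv)
      have := IsChunking.true_cons _ hv
        (ih (w := w.drop a) (by simp at hsum ⊢; omega) (right_ne_zero_of_mul h))
      rwa [List.take_append_drop, List.length_take_of_le ha] at this

namespace IsChunking

variable {u : List Bool} {d : List ℕ} {w : List Bool}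

theorem sum_eq (h : IsChunking u d w) : d.sum = w.length := by
  induction h <;> simp_all [add_comm]

theorem length_eq (h : IsChunking u d w) : d.length = u.length := by
  induction h <;> simp_all

theorem length_le (h : IsChunking u d w) : u.length ≤ w.length := by
  induction h with
  | nil => rfl
  | false_cons _ ih => simpa using ih
  | true_cons v hv _ ih =>
    have := List.length_pos_of_mem hv
    simp; omega

theorem true_mem_iff (h : IsChunking u d w) : true ∈ u ↔ true ∈ w := by
  induction h <;> simp_all

end IsChunking

noncomputable def chunkings (w : List Bool) : Finset (Σ n, (Fin n → Bool) × (Fin n → ℕ)) :=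
  ((range (w.length + 1)).sigma fun n => univ ×ˢ Nat.antidiagonalTuple n w.length).filter
    fun x => IsChunking (List.ofFn x.2.1) (List.ofFn x.2.2) w

theorem mem_chunkings {w : List Bool} {x : Σ n, (Fin n → Bool) × (Fin n → ℕ)} :
    x ∈ chunkings w ↔ IsChunking (List.ofFn x.2.1) (List.ofFn x.2.2) w := by
  refine ⟨fun h => (mem_filter.1 h).2, fun h => mem_filter.2 ⟨?_, h⟩⟩
  have := h.sum_eq
  have := h.length_le
  simp_all [Nat.mem_antidiagonalTuple, List.sum_ofFn]

theorem eq_zero_of_true_not_mem {B : List Bool → R}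
    (hB : ∀ n, 1 ≤ n → B (List.replicate n false) = 0) (hB0 : B [] = 0) (v : List Bool)
    (hv : true ∉ v) : B v = 0 := by
  obtain ⟨n, rfl⟩ : ∃ n, v = List.replicate n false :=
    ⟨v.length, List.eq_replicate_iff.2 ⟨rfl, fun b hb => by cases b <;> simp_all⟩⟩
  rcases n with _ | n
  · exact hB0
  · exact hB _ n.succ_pos

theorem substCoeff_eq_sum_chunkings (A : List Bool → R) {B : List Bool → R}
    (hB : ∀ v, true ∉ v → B v = 0) (w : List Bool) :
    substCoeff A B w = ∑ x ∈ chunkings w,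
      A (List.ofFn x.2.1) * cutCoeff B (List.ofFn x.2.1) (List.ofFn x.2.2) w := by
  rw [chunkings, sum_filter_of_ne, substCoeff, sum_sigma]
  · refine sum_congr rfl fun n _ => ?_
    simp only [mCoeff_eq_sum_cutCoeff B List.length_ofFn, mul_sum, sum_product]
  · intro x hx hne
    exact isChunking_of_cutCoeff_ne_zero hB
      (by simp_all [Nat.mem_antidiagonalTuple, List.sum_ofFn]) (right_ne_zero_of_mul hne)

/-- `w = a₀ w₁ a₁ ⋯ w_r a_r` with `e₁ ∉ aⱼ` and `e₁ ∈ wᵢ`, where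
`L = [|a₀|, |w₁|, |a₁|, …, |w_r|, |a_r|]`. -/
inductive IsSegmentation : List ℕ → List Bool → Prop
  | last (a : List Bool) : true ∉ a → IsSegmentation [a.length] a
  | cons (a v : List Bool) {L : List ℕ} {w : List Bool} : true ∉ a → true ∈ v →
      IsSegmentation L w → IsSegmentation (a.length :: v.length :: L) (a ++ v ++ w)

def segProd (B : List Bool → R) : List ℕ → List Bool → R
  | a :: l :: L, w => B ((w.drop a).take l) * segProd B L (w.drop (a + l))
  | _, _ => 1

def contract : List ℕ → List Bool → List Bool
  | a :: l :: L, w => w.take a ++ true :: contract L (w.drop (a + l))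
  | [a], w => w.take a
  | [], _ => []

def mergeBlocks : List Bool → List ℕ → List ℕ
  | true :: u, a :: d => 0 :: a :: mergeBlocks u d
  | false :: u, _ :: d => (mergeBlocks u d).modifyHead (· + 1)
  | _, _ => [0]

def splitBlocks : List ℕ → List Bool × List ℕ
  | a :: l :: L => (List.replicate a false ++ true :: (splitBlocks L).1,
      List.replicate a 1 ++ l :: (splitBlocks L).2)
  | [a] => (List.replicate a false, List.replicate a 1)
  | [] => ([], [])

theorem segProd_modifyHead_succ (B : List Bool → R) (L : List ℕ) (w : List Bool) :
    segProd B (L.modifyHead (· + 1)) (false :: w) = segProd B L w := by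
  rcases L with _ | ⟨a, _ | ⟨l, L⟩⟩ <;> simp [segProd, add_right_comm _ 1]

theorem contract_modifyHead_succ {L : List ℕ} (hL : L ≠ []) (w : List Bool) :
    contract (L.modifyHead (· + 1)) (false :: w) = false :: contract L w := by
  rcases L with _ | ⟨a, _ | ⟨l, L⟩⟩ <;> simp_all [contract, add_right_comm _ 1]

theorem splitBlocks_modifyHead_succ {L : List ℕ} (hL : L ≠ []) :
    splitBlocks (L.modifyHead (· + 1)) = (false :: (splitBlocks L).1, 1 :: (splitBlocks L).2) := by
  rcases L with _ | ⟨a, _ | ⟨l, L⟩⟩ <;> simp_all [splitBlocks, List.replicate_succ]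

theorem mergeBlocks_ne_nil (u : List Bool) (d : List ℕ) : mergeBlocks u d ≠ [] := by
  induction u generalizing d with
  | nil => simp [mergeBlocks]
  | cons x u ih => rcases x with _ | _ <;> rcases d with _ | ⟨a, d⟩ <;> simp [mergeBlocks, ih]

theorem mergeBlocks_replicate_append (a : ℕ) (u : List Bool) (d : List ℕ) :
    mergeBlocks (List.replicate a false ++ u) (List.replicate a 1 ++ d) =
      (mergeBlocks u d).modifyHead (· + a) := by
  induction a with
  | zero => simp [show (fun x : ℕ => x) = id from rfl]
  | succ a ih => simp [List.replicate_succ, mergeBlocks, ih, Function.comp_def, add_assoc]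

theorem IsSegmentation.modifyHead_succ {L : List ℕ} {w : List Bool} (h : IsSegmentation L w) :
    IsSegmentation (L.modifyHead (· + 1)) (false :: w) := by
  induction h with
  | last a ha => simpa using IsSegmentation.last (false :: a) (by simpa using ha)
  | cons a v ha hv h => simpa using IsSegmentation.cons (false :: a) v (by simpa using ha) hv h

theorem IsSegmentation.sum_eq {L : List ℕ} {w : List Bool} (h : IsSegmentation L w) :
    L.sum = w.length := by
  induction h <;> simp_all

namespace IsChunking

variable {u : List Bool} {d : List ℕ} {w : List Bool}

theorem replicate_append (h : IsChunking u d w) (a : List Bool) (ha : true ∉ a) :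
    IsChunking (List.replicate a.length false ++ u) (List.replicate a.length 1 ++ d) (a ++ w) := by
  induction a with
  | nil => simpa using h
  | cons x a ih =>
    obtain ⟨rfl, ha'⟩ : x = false ∧ true ∉ a := by simpa using ha
    exact .false_cons (ih ha')

theorem length_mergeBlocks (h : IsChunking u d w) :
    (mergeBlocks u d).length = 2 * u.count true + 1 := by
  induction h <;> simp_all [mergeBlocks]; ring

theorem isSegmentation_mergeBlocks (h : IsChunking u d w) : IsSegmentation (mergeBlocks u d) w := by
  induction h with
  | nil => exact .last [] (by simp)
  | false_cons _ ih => exact ih.modifyHead_succ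
  | true_cons v hv _ ih => simpa [mergeBlocks] using IsSegmentation.cons [] v (by simp) hv ih

theorem segProd_mergeBlocks (B : List Bool → R) (h : IsChunking u d w) :
    segProd B (mergeBlocks u d) w = cutCoeff B u d w := by
  induction h <;> simp_all [mergeBlocks, segProd, cutCoeff, segProd_modifyHead_succ]

theorem contract_mergeBlocks (h : IsChunking u d w) : contract (mergeBlocks u d) w = u := by
  induction h <;> simp_all [mergeBlocks, contract, contract_modifyHead_succ, mergeBlocks_ne_nil]

theorem splitBlocks_mergeBlocks (h : IsChunking u d w) :
    splitBlocks (mergeBlocks u d) = (u, d) := by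
  induction h <;>
    simp_all [mergeBlocks, splitBlocks, splitBlocks_modifyHead_succ, mergeBlocks_ne_nil]

end IsChunking

namespace IsSegmentation

variable {L : List ℕ} {w : List Bool}

theorem isChunking_splitBlocks (h : IsSegmentation L w) :
    IsChunking (splitBlocks L).1 (splitBlocks L).2 w := by
  induction h with
  | last a ha => simpa [splitBlocks] using IsChunking.nil.replicate_append a ha
  | cons a v ha hv _ ih =>
    simpa [splitBlocks] using (IsChunking.true_cons v hv ih).replicate_append a ha

theorem mergeBlocks_splitBlocks (h : IsSegmentation L w) :
    mergeBlocks (splitBlocks L).1 (splitBlocks L).2 = L := by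
  induction h with
  | last a _ => simpa [splitBlocks, mergeBlocks] using mergeBlocks_replicate_append a.length [] []
  | cons a v _ _ _ ih => simp [splitBlocks, mergeBlocks, mergeBlocks_replicate_append, ih]

end IsSegmentation

def nthPart : List ℕ → List Bool → ℕ → List Bool
  | a :: _, w, 0 => w.take a
  | a :: L, w, k + 1 => nthPart L (w.drop a) k
  | [], _, _ => []

theorem nthPart_eq_drop_take (L : List ℕ) (w : List Bool) (k : ℕ) :
    nthPart L w k = (w.take (L.take (k + 1)).sum).drop (L.take k).sum := by
  induction L generalizing w k with
  | nil => simp [nthPart]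
  | cons a L ih =>
    cases k <;> simp [nthPart, ih, ← List.drop_drop, List.drop_take, Nat.add_sub_add_left]

theorem prod_nthPart_eq_segProd (B : List Bool → R) : ∀ (L : List ℕ) (w : List Bool),
    ∏ k : Fin L.length, (if (k : ℕ) % 2 = 1 then B (nthPart L w k) else 1) = segProd B L w
  | [], _ => by simp [segProd]
  | [_], _ => by simp [segProd]
  | a :: l :: L, w => by
    simp [Fin.prod_univ_succ, nthPart, segProd, ← prod_nthPart_eq_segProd B L (w.drop (a + l)),
      List.drop_drop, Nat.add_assoc]

theorem flatten_ofFn_nthPart_eq_contract : ∀ (L : List ℕ) (w : List Bool),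
    (List.ofFn fun k : Fin L.length =>
      if (k : ℕ) % 2 = 1 then [true] else nthPart L w k).flatten = contract L w
  | [], _ => by simp [contract]
  | [_], _ => by simp [nthPart, contract]
  | a :: l :: L, w => by
    simp [List.ofFn_succ, nthPart, contract, ← flatten_ofFn_nthPart_eq_contract L (w.drop (a + l)),
      List.drop_drop, Nat.add_assoc]

theorem IsSegmentation.nthPart_parity {L : List ℕ} {w : List Bool} (h : IsSegmentation L w) :
    ∀ k : Fin L.length,
      ((k : ℕ) % 2 = 1 → true ∈ nthPart L w k) ∧ ((k : ℕ) % 2 = 0 → true ∉ nthPart L w k) := by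
  induction h with
  | last a ha => simpa [nthPart] using ha
  | cons a v ha hv _ ih =>
    rintro ⟨_ | _ | k, hk⟩
    · simpa [nthPart] using ha
    · simpa [nthPart] using hv
    · simpa [nthPart, Nat.add_assoc] using ih ⟨k, by simpa using hk⟩

theorem isSegmentation_of_nthPart_parity : ∀ {L : List ℕ} {w : List Bool},
    L.sum = w.length → L.length % 2 = 1 →
    (∀ k : Fin L.length,
      ((k : ℕ) % 2 = 1 → true ∈ nthPart L w k) ∧ ((k : ℕ) % 2 = 0 → true ∉ nthPart L w k)) →
    IsSegmentation L w
  | [a], w, hsum, _, h => by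
    obtain rfl : a = w.length := by simpa using hsum
    simpa using IsSegmentation.last w (by simpa [nthPart] using (h 0).2 rfl)
  | a :: l :: L, w, hsum, hodd, h => by
    have hrest := isSegmentation_of_nthPart_parity (L := L) (w := w.drop (a + l))
      (by simp at hsum ⊢; omega) (by simp at hodd; omega)
      (fun k => by simpa [nthPart, Nat.add_assoc] using h ⟨k + 2, by simp⟩)
    have := IsSegmentation.cons _ _ (by simpa [nthPart] using (h 0).2 rfl)
      (by simpa [nthPart] using (h 1).1 rfl) hrest
    have ha : a ≤ w.length := by simp at hsum; omega
    have hl : l ≤ w.length - a := by simp at hsum; omega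
    rwa [List.append_assoc, ← List.drop_drop, List.take_append_drop, List.take_append_drop,
      List.length_take_of_le ha, List.length_take_of_le (by simpa using hl)] at this

section CutPoints

variable {m t : ℕ}

/-- The `min` only makes the value land in `Fin (m + 1)`; it is inactive when `L.sum = m`. -/
def cutPoints (m t : ℕ) (L : List ℕ) : Fin (t + 1) → Fin (m + 1) :=
  fun k => ⟨min (L.take k).sum m, Nat.lt_succ_of_le (min_le_right _ _)⟩

def partLengths (b : Fin (t + 1) → Fin (m + 1)) : List ℕ :=
  List.ofFn fun k : Fin t => b k.succ - b k.castSucc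

theorem val_cutPoints {L : List ℕ} (hsum : L.sum = m) (k : Fin (t + 1)) :
    (cutPoints m t L k : ℕ) = (L.take k).sum :=
  min_eq_left (hsum ▸ (List.take_sublist _ _).sum_le_sum (fun _ _ => Nat.zero_le _))

theorem monotone_cutPoints (L : List ℕ) : Monotone (cutPoints m t L) :=
  fun _ _ h => Fin.mk_le_mk.2 (min_le_min_right _ (List.monotone_sum_take L h))

theorem cutPoints_zero (L : List ℕ) : cutPoints m t L 0 = 0 := by
  simp [cutPoints]

theorem cutPoints_last {L : List ℕ} (hsum : L.sum = m) (hlen : L.length = t) :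
    cutPoints m t L (Fin.last t) = Fin.last m := by
  ext
  simp [val_cutPoints hsum, ← hlen, hsum]

theorem segPart_cutPoints {L : List ℕ} {w : List Bool} (hsum : L.sum = w.length) (k : Fin t) :
    segPart w (cutPoints w.length t L) k = nthPart L w k := by
  simp [segPart, val_cutPoints hsum, nthPart_eq_drop_take]

theorem partLengths_cutPoints {L : List ℕ} (hsum : L.sum = m) (hlen : L.length = t) :
    partLengths (cutPoints m t L) = L := by
  subst hlen
  refine List.ext_getElem (by simp [partLengths]) fun i _ _ => ?_
  simp [partLengths, val_cutPoints hsum, List.sum_take_succ]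

theorem sum_take_partLengths {b : Fin (t + 1) → Fin (m + 1)} (hb : Monotone b) (k : Fin (t + 1)) :
    ((partLengths b).take k).sum = b k - b 0 := by
  induction k using Fin.induction with
  | zero => simp
  | succ k ih =>
    rw [Fin.val_castSucc] at ih
    have hk : (k : ℕ) < (partLengths b).length := by simp [partLengths]
    rw [Fin.val_succ, List.sum_take_succ _ _ hk, ih]
    have := hb (Fin.castSucc_le_succ k)
    have := hb (Fin.zero_le k.castSucc)
    simp [partLengths]
    omega

theorem cutPoints_partLengths {b : Fin (t + 1) → Fin (m + 1)} (hb : Monotone b) (h0 : b 0 = 0) :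
    cutPoints m t (partLengths b) = b := by
  ext k
  simp [cutPoints, sum_take_partLengths hb, h0, (b k).is_le]

theorem sum_partLengths {b : Fin (t + 1) → Fin (m + 1)} (hb : Monotone b) (h0 : b 0 = 0)
    (hlast : b (Fin.last t) = Fin.last m) : (partLengths b).sum = m := by
  have := sum_take_partLengths hb (Fin.last t)
  rwa [Fin.val_last, List.take_of_length_le (by simp [partLengths]), hlast, h0] at this

end CutPoints

noncomputable def segmentCuts (w : List Bool) :
    Finset (Σ r, Fin (2 * r + 1 + 1) → Fin (w.length + 1)) :=
  (Icc 1 w.length).sigma fun r =>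
    univ.filter fun b : Fin (2 * r + 1 + 1) → Fin (w.length + 1) =>
      Monotone b ∧ b 0 = 0 ∧ b (Fin.last (2 * r + 1)) = Fin.last w.length ∧
      ∀ k : Fin (2 * r + 1),
        (((k : ℕ) % 2 = 1) → true ∈ segPart w b k) ∧
        (((k : ℕ) % 2 = 0) → true ∉ segPart w b k)

def cutsOfSegmentation (m : ℕ) (L : List ℕ) : Σ r, Fin (2 * r + 1 + 1) → Fin (m + 1) :=
  ⟨L.length / 2, cutPoints m _ L⟩

def indexOfChunking (u : List Bool) (d : List ℕ) : Σ n, (Fin n → Bool) × (Fin n → ℕ) :=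
  ⟨u.length, u.get, fun k => d.getD k 0⟩

theorem cutsOfSegmentation_eq {m r : ℕ} {L : List ℕ} (hlen : L.length = 2 * r + 1) :
    cutsOfSegmentation m L = ⟨r, cutPoints m (2 * r + 1) L⟩ := by
  rw [cutsOfSegmentation, show L.length / 2 = r by omega]

theorem ofFn_indexOfChunking_fst (u : List Bool) (d : List ℕ) :
    List.ofFn (indexOfChunking u d).2.1 = u :=
  List.ofFn_get u

theorem ofFn_indexOfChunking_snd {u : List Bool} {d : List ℕ} (h : d.length = u.length) :
    List.ofFn (indexOfChunking u d).2.2 = d :=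
  List.ext_getElem (by simp [indexOfChunking, h]) fun i _ hi => by simp [indexOfChunking, hi]

theorem sigma_ext_ofFn {x y : Σ n, (Fin n → Bool) × (Fin n → ℕ)}
    (h₁ : List.ofFn x.2.1 = List.ofFn y.2.1) (h₂ : List.ofFn x.2.2 = List.ofFn y.2.2) : x = y := by
  obtain ⟨n, f, d⟩ := x
  obtain ⟨n', f', d'⟩ := y
  obtain rfl : n = n' := by simpa using congrArg List.length h₁
  simp_all [List.ofFn_inj]

theorem indexOfChunking_ofFn {n : ℕ} (f : Fin n → Bool) (d : Fin n → ℕ) :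
    indexOfChunking (List.ofFn f) (List.ofFn d) = ⟨n, f, d⟩ :=
  sigma_ext_ofFn (ofFn_indexOfChunking_fst _ _) (ofFn_indexOfChunking_snd (by simp))

section SegmentCuts

variable {w : List Bool}

theorem IsSegmentation.mem_segmentCuts {L : List ℕ} {r : ℕ} (h : IsSegmentation L w)
    (hlen : L.length = 2 * r + 1) (hr : r ∈ Icc 1 w.length) :
    ⟨r, cutPoints w.length (2 * r + 1) L⟩ ∈ segmentCuts w := by
  simp only [segmentCuts, mem_sigma, mem_filter, mem_univ, true_and]
  refine ⟨hr, monotone_cutPoints L, cutPoints_zero L, cutPoints_last h.sum_eq hlen, fun k => ?_⟩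
  rw [segPart_cutPoints h.sum_eq]
  exact h.nthPart_parity ⟨k, by have := k.2; omega⟩

theorem IsChunking.mem_segmentCuts {u : List Bool} {d : List ℕ} (hw : true ∈ w)
    (h : IsChunking u d w) : cutsOfSegmentation w.length (mergeBlocks u d) ∈ segmentCuts w := by
  rw [cutsOfSegmentation_eq h.length_mergeBlocks]
  refine h.isSegmentation_mergeBlocks.mem_segmentCuts h.length_mergeBlocks (mem_Icc.2 ⟨?_, ?_⟩)
  · exact List.count_pos_iff.2 (h.true_mem_iff.2 hw)
  · exact (List.count_le_length).trans h.length_le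

theorem isSegmentation_of_mem_segmentCuts {y : Σ r, Fin (2 * r + 1 + 1) → Fin (w.length + 1)}
    (hy : y ∈ segmentCuts w) : IsSegmentation (partLengths y.2) w := by
  simp only [segmentCuts, mem_sigma, mem_filter, mem_univ, true_and] at hy
  obtain ⟨-, hb, h0, hlast, hcond⟩ := hy
  have hsum := sum_partLengths hb h0 hlast
  refine isSegmentation_of_nthPart_parity hsum (by simp [partLengths]) fun k => ?_
  have hseg (j : Fin (2 * y.1 + 1)) : segPart w y.2 j = nthPart (partLengths y.2) w j := by
    have := segPart_cutPoints (t := 2 * y.1 + 1) hsum j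
    rwa [cutPoints_partLengths hb h0] at this
  simpa [hseg] using hcond ⟨k, by simpa [partLengths] using k.2⟩

theorem cutsOfSegmentation_partLengths {y : Σ r, Fin (2 * r + 1 + 1) → Fin (w.length + 1)}
    (hy : y ∈ segmentCuts w) : cutsOfSegmentation w.length (partLengths y.2) = y := by
  simp only [segmentCuts, mem_sigma, mem_filter, mem_univ, true_and] at hy
  rw [cutsOfSegmentation_eq (r := y.1) (by simp [partLengths]),
    cutPoints_partLengths hy.2.1 hy.2.2.1]

theorem partLengths_cutsOfSegmentation {L : List ℕ} (h : IsSegmentation L w)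
    (hodd : L.length % 2 = 1) : partLengths (cutsOfSegmentation w.length L).2 = L := by
  have hlen : L.length = 2 * (L.length / 2) + 1 := by omega
  rw [cutsOfSegmentation_eq hlen]
  exact partLengths_cutPoints h.sum_eq hlen

theorem summand_cutPoints (A B : List Bool → R) {L : List ℕ} {t : ℕ} (h : IsSegmentation L w)
    (hlen : L.length = t) :
    (∏ k : Fin t, if (k : ℕ) % 2 = 1 then B (segPart w (cutPoints w.length t L) k) else 1) *
        A ((List.ofFn fun k : Fin t =>
          if (k : ℕ) % 2 = 1 then [true] else segPart w (cutPoints w.length t L) k).flatten) =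
      segProd B L w * A (contract L w) := by
  subst hlen
  simp only [segPart_cutPoints h.sum_eq, prod_nthPart_eq_segProd, flatten_ofFn_nthPart_eq_contract]

end SegmentCuts

end SubstCoeff

open SubstCoeff in
theorem stmt12_general {R : Type*} [CommRing R] (A B : List Bool → R)
    (hB : ∀ n, 1 ≤ n → B (List.replicate n false) = 0)
    (hB0 : B [] = 0)
    (w : List Bool) (hw : true ∈ w) :
    substCoeff A B w =
      ∑ r ∈ Finset.Icc 1 w.length,
        ∑ b ∈ Finset.univ.filter
            (fun b : Fin (2 * r + 1 + 1) → Fin (w.length + 1) =>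
              Monotone b ∧ b 0 = 0 ∧ b (Fin.last (2 * r + 1)) = Fin.last w.length ∧
              ∀ k : Fin (2 * r + 1),
                (((k : ℕ) % 2 = 1) → true ∈ segPart w b k) ∧
                (((k : ℕ) % 2 = 0) → true ∉ segPart w b k)),
          (∏ k : Fin (2 * r + 1), if (k : ℕ) % 2 = 1 then B (segPart w b k) else 1) *
            A ((List.ofFn fun k : Fin (2 * r + 1) =>
                if (k : ℕ) % 2 = 1 then [true] else segPart w b k).flatten) := by
  rw [substCoeff_eq_sum_chunkings A (eq_zero_of_true_not_mem hB hB0) w, Finset.sum_sigma']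
  refine Finset.sum_nbij'
    (fun x => cutsOfSegmentation w.length (mergeBlocks (List.ofFn x.2.1) (List.ofFn x.2.2)))
    (fun y => indexOfChunking (splitBlocks (partLengths y.2)).1 (splitBlocks (partLengths y.2)).2)
    (fun x hx => (mem_chunkings.1 hx).mem_segmentCuts hw) (fun y hy => ?_) (fun x hx => ?_)
    (fun y hy => ?_) (fun x hx => ?_)
  · have h := (isSegmentation_of_mem_segmentCuts hy).isChunking_splitBlocks
    rw [mem_chunkings, ofFn_indexOfChunking_fst, ofFn_indexOfChunking_snd h.length_eq]
    exact h
  · have h := mem_chunkings.1 hx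
    simp only [partLengths_cutsOfSegmentation h.isSegmentation_mergeBlocks
      (by simp [h.length_mergeBlocks]), h.splitBlocks_mergeBlocks, indexOfChunking_ofFn]
  · have hseg := isSegmentation_of_mem_segmentCuts hy
    have h := hseg.isChunking_splitBlocks
    simp only [ofFn_indexOfChunking_fst, ofFn_indexOfChunking_snd h.length_eq,
      hseg.mergeBlocks_splitBlocks, cutsOfSegmentation_partLengths hy]
  · have h := mem_chunkings.1 hx
    rw [cutsOfSegmentation_eq h.length_mergeBlocks,
      summand_cutPoints A B h.isSegmentation_mergeBlocks h.length_mergeBlocks,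
      h.segProd_mergeBlocks, h.contract_mergeBlocks, mul_comm]

/-- Coefficient formula for substitution: if `A_{e₀ⁿ} = B_{e₀ⁿ} = 0` for `n ≥ 1` and
`B_∅ = 0`, then for any word `w` containing `e₁`,
`A(e₀,B)_w = ∑ (∏ᵢ B_{wᵢ}) A_{w/(wᵢ)ᵢ}`, the sum being over all `r ≥ 1` and all
factorizations `w = a₀ w₁ a₁ ⋯ a_{r-1} w_r a_r` (encoded by monotone cut points `b`,
parts alternating `a₀, w₁, a₁, …, w_r, a_r`) in which each `aⱼ` is a (possibly empty)
power of `e₀` and each `wᵢ` contains at least one `e₁`, and where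
`w/(wᵢ)ᵢ = a₀ e₁ a₁ ⋯ a_{r-1} e₁ a_r` is the contraction. -/
theorem stmt12 {R : Type*} [CommRing R] [Algebra ℚ R] (A B : List Bool → R)
    (hA : ∀ n, 1 ≤ n → A (List.replicate n false) = 0)
    (hB : ∀ n, 1 ≤ n → B (List.replicate n false) = 0)
    (hB0 : B [] = 0)
    (w : List Bool) (hw : true ∈ w) :
    substCoeff A B w =
      ∑ r ∈ Finset.Icc 1 w.length,
        ∑ b ∈ Finset.univ.filter
            (fun b : Fin (2 * r + 1 + 1) → Fin (w.length + 1) =>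
              Monotone b ∧ b 0 = 0 ∧ b (Fin.last (2 * r + 1)) = Fin.last w.length ∧
              ∀ k : Fin (2 * r + 1),
                (((k : ℕ) % 2 = 1) → true ∈ segPart w b k) ∧
                (((k : ℕ) % 2 = 0) → true ∉ segPart w b k)),
          (∏ k : Fin (2 * r + 1), if (k : ℕ) % 2 = 1 then B (segPart w b k) else 1) *
            A ((List.ofFn fun k : Fin (2 * r + 1) =>
                if (k : ℕ) % 2 = 1 then [true] else segPart w b k).flatten) :=
  stmt12_general A B hB hB0 w hw
end

section
/- Let $R$ be a commutative $\mathbb{Q}$-algebra, $A \in R\langle\langle e_0,e_1\rangle\rangle$ group-like (satisfying the shuffle relations with constant term 1) and $B \in R\langle\langle e_0,e_1\rangle\rangle$ primitive (i.e. $B$ is a Lie-like element: its coefficients vanish on all nontrivial shuffle products and on the empty word). Then the substitution $A(e_0,B)$ (replacing $e_1$ by $B$ in $A$) is group-like, and $A(e_0,B)^{-1} = A^{-1}(e_0,B)$. -/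
/-- The list of all shuffles of two words (with multiplicity). -/
def shuffles {α : Type*} : List α → List α → List (List α)
  | [], ys => [ys]
  | x :: xs, [] => [x :: xs]
  | x :: xs, y :: ys =>
      ((shuffles xs (y :: ys)).map (x :: ·)) ++ ((shuffles (x :: xs) ys).map (y :: ·))
termination_by xs ys => xs.length + ys.length

/-- Convolution (concatenation) product of noncommutative series on `{e₀, e₁}`. -/
def ncMul {R : Type*} [CommRing R] (P Q : List Bool → R) : List Bool → R :=
  fun w => ∑ i ∈ Finset.range (w.length + 1), P (w.take i) * Q (w.drop i)

/-- Group-like: constant coefficient `1` and the shuffle relations hold. -/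
def IsGroupLike {R : Type*} [CommRing R] (P : List Bool → R) : Prop :=
  P [] = 1 ∧ ∀ u v : List Bool, P u * P v = ((shuffles u v).map P).sum

/-- Primitive (Lie-like): zero constant coefficient, and the coefficients vanish on
all nontrivial shuffle products: `∑_{w ∈ u ш v} B_w = 0` for `u, v` nonempty. -/
def IsPrimitive {R : Type*} [CommRing R] (B : List Bool → R) : Prop :=
  B [] = 0 ∧ ∀ u v : List Bool, u ≠ [] → v ≠ [] → ((shuffles u v).map B).sum = 0

/-!
Substituting `B` for `e₁` sends a word `s` to the series `φ s := mCoeff B s`, multiplicatively in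
`s`, and `A(e₀,B) = ∑ₛ A s • φ s`; because `B` has no constant term only the words with
`|s| ≤ |w|` contribute to the coefficient of `w`. Multiplicativity of `φ` gives
`(A * A')(e₀,B) = A(e₀,B) * A'(e₀,B)`, hence the statement about inverses.

For group-likeness, read `(u, v) ↦ ∑_{w ∈ u ш v} P w` as the coproduct `Δ P`. It is multiplicative,
and `e₀`, `B` are primitive, so `Δ (φ s) = ∑ φ s₁ ⊗ φ s₂` over the deshuffles `(s₁, s₂)` of `s`.
A word `s` occurs in `s₁ ш s₂` exactly as often as `(s₁, s₂)` occurs among the deshuffles of `s`,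
so `Δ A(e₀,B) = ∑ (∑_{s ∈ s₁ ш s₂} A s) φ s₁ ⊗ φ s₂ = ∑ A s₁ A s₂ φ s₁ ⊗ φ s₂`, which is
`A(e₀,B) ⊗ A(e₀,B)`.
-/

section ConvolutionProduct

variable {R : Type*} [CommRing R]

def ncOne : List Bool → R := fun w => if w = [] then 1 else 0

def ncLetter (a : Bool) : List Bool → R := fun w => if w = [a] then 1 else 0

@[simp] lemma ncOne_nil : (ncOne : List Bool → R) [] = 1 := rfl

@[simp] lemma ncOne_cons (a : Bool) (w : List Bool) : (ncOne : List Bool → R) (a :: w) = 0 := rfl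

@[simp] lemma ncMul_nil (P Q : List Bool → R) : ncMul P Q [] = P [] * Q [] := by
  simp [ncMul]

lemma ncMul_cons (P Q : List Bool → R) (a : Bool) (w : List Bool) :
    ncMul P Q (a :: w) = P [] * Q (a :: w) + ncMul (fun t => P (a :: t)) Q w := by
  simp only [ncMul, List.length_cons, Finset.sum_range_succ' _ (w.length + 1), List.take_succ_cons,
    List.drop_succ_cons, List.take_zero, List.drop_zero]
  ring

lemma ncMul_comp_cons (P Q : List Bool → R) (a : Bool) :
    (fun t => ncMul P Q (a :: t))
      = (fun t => P [] * Q (a :: t)) + ncMul (fun t => P (a :: t)) Q := by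
  ext t; simp [ncMul_cons]

@[simp] lemma ncMul_zero_left (Q : List Bool → R) : ncMul 0 Q = 0 := by
  ext w; simp [ncMul]

lemma ncMul_add_left (P P' Q : List Bool → R) :
    ncMul (P + P') Q = ncMul P Q + ncMul P' Q := by
  ext w; simp [ncMul, add_mul, Finset.sum_add_distrib]

lemma ncMul_const_mul_left (c : R) (P Q : List Bool → R) :
    ncMul (fun w => c * P w) Q = fun w => c * ncMul P Q w := by
  ext w; simp [ncMul, Finset.mul_sum, mul_assoc]

@[simp] lemma ncOne_ncMul (P : List Bool → R) : ncMul ncOne P = P := by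
  ext (_ | ⟨a, w⟩)
  · simp
  · rw [ncMul_cons, show (fun t => (ncOne : List Bool → R) (a :: t)) = 0 from rfl]
    simp

lemma ncMul_assoc (P Q S : List Bool → R) : ncMul (ncMul P Q) S = ncMul P (ncMul Q S) := by
  ext w
  induction w generalizing P Q with
  | nil => simp [mul_assoc]
  | cons a w ih =>
    rw [ncMul_cons, ncMul_comp_cons, ncMul_add_left, ncMul_const_mul_left, Pi.add_apply, ih,
      ncMul_cons P, ncMul_cons Q]
    simp only [ncMul_nil]
    ring

lemma ncMul_ncLetter_cons (a b : Bool) (P : List Bool → R) (w : List Bool) :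
    ncMul (ncLetter a) P (b :: w) = if b = a then P w else 0 := by
  have hshift : (fun t => (ncLetter a : List Bool → R) (b :: t)) = if b = a then ncOne else 0 := by
    ext t; by_cases h : b = a <;> simp [ncLetter, ncOne, h]
  rw [ncMul_cons, hshift]
  split_ifs <;> simp [ncLetter]

lemma ncMul_eq_zero_of_length_lt {P Q : List Bool → R} {m n : ℕ}
    (hP : ∀ w : List Bool, w.length < m → P w = 0) (hQ : ∀ w : List Bool, w.length < n → Q w = 0)
    {w : List Bool} (hw : w.length < m + n) : ncMul P Q w = 0 := by
  refine Finset.sum_eq_zero fun i hi_mem => ?_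
  rw [Finset.mem_range] at hi_mem
  by_cases hi : i < m
  · rw [hP _ (by rw [List.length_take]; omega), zero_mul]
  · rw [hQ _ (by rw [List.length_drop]; omega), mul_zero]

end ConvolutionProduct

section Monomials

variable {R : Type*} [CommRing R] (B : List Bool → R)

def substLetter (a : Bool) : List Bool → R := cond a B (ncLetter false)

lemma substLetter_nil (hB0 : B [] = 0) (a : Bool) : substLetter B a [] = 0 := by
  cases a <;> simp [substLetter, ncLetter, hB0]

@[simp] lemma mCoeff_nil : mCoeff B [] = ncOne := rfl

lemma mCoeff_cons (a : Bool) (u : List Bool) :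
    mCoeff B (a :: u) = ncMul (substLetter B a) (mCoeff B u) := by
  ext w
  cases a with
  | true => rfl
  | false =>
    rcases w with _ | ⟨b, w⟩
    · simp [mCoeff, substLetter, ncLetter]
    · cases b <;> simp [mCoeff, substLetter, ncMul_ncLetter_cons]

lemma mCoeff_append (s t : List Bool) :
    mCoeff B (s ++ t) = ncMul (mCoeff B s) (mCoeff B t) := by
  induction s with
  | nil => simp
  | cons a s ih => rw [List.cons_append, mCoeff_cons, mCoeff_cons, ih, ncMul_assoc]

lemma mCoeff_eq_zero_of_length_lt (hB0 : B [] = 0) {s w : List Bool}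
    (h : w.length < s.length) : mCoeff B s w = 0 := by
  induction s generalizing w with
  | nil => simp at h
  | cons a s ih =>
    rw [mCoeff_cons]
    refine ncMul_eq_zero_of_length_lt (m := 1) (n := s.length) (fun v hv => ?_)
      (fun v hv => ih hv) (by simpa [add_comm] using h)
    rw [List.length_eq_zero_iff.mp (Nat.lt_one_iff.mp hv), substLetter_nil B hB0]

end Monomials

section Words

variable {α : Type*} [Fintype α] [DecidableEq α]

def words (N : ℕ) : Finset (List α) :=
  (Finset.range (N + 1)).biUnion fun n => Finset.univ.image (List.ofFn : (Fin n → α) → List α)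

@[simp] lemma mem_words {N : ℕ} {s : List α} : s ∈ words N ↔ s.length ≤ N := by
  simp only [words, Finset.mem_biUnion, Finset.mem_range, Finset.mem_image, Finset.mem_univ,
    true_and]
  constructor
  · rintro ⟨n, hn, f, rfl⟩
    simp only [List.length_ofFn]
    omega
  · exact fun h => ⟨s.length, by omega, s.get, List.ofFn_get s⟩

def wordPairs (N : ℕ) : Finset (List α × List α) :=
  (words N ×ˢ words N).filter fun p => p.1.length + p.2.length ≤ N

@[simp] lemma mem_wordPairs {N : ℕ} {p : List α × List α} :
    p ∈ wordPairs N ↔ p.1.length + p.2.length ≤ N := by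
  simp only [wordPairs, Finset.mem_filter, Finset.mem_product, mem_words]
  omega

lemma wordPairs_subset (N : ℕ) : (wordPairs N : Finset (List α × List α)) ⊆ words N ×ˢ words N :=
  Finset.filter_subset _ _

lemma sum_words_sum_take_drop {M : Type*} [AddCommMonoid M] (N : ℕ) (F : List α × List α → M) :
    ∑ s ∈ words N, ∑ k ∈ Finset.range (s.length + 1), F (s.take k, s.drop k)
      = ∑ p ∈ wordPairs N, F p := by
  rw [Finset.sum_sigma']
  refine Finset.sum_nbij' (fun x => (x.1.take x.2, x.1.drop x.2))
    (fun p => ⟨p.1 ++ p.2, p.1.length⟩) ?_ ?_ ?_ ?_ (fun _ _ => rfl)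
  · rintro ⟨s, k⟩ h
    simp only [Finset.mem_sigma, mem_words, Finset.mem_range] at h
    simp only [mem_wordPairs, List.length_take, List.length_drop]
    omega
  · rintro ⟨p₁, p₂⟩ h
    simp only [mem_wordPairs] at h
    simp only [Finset.mem_sigma, mem_words, Finset.mem_range, List.length_append]
    omega
  · rintro ⟨s, k⟩ h
    simp only [Finset.mem_sigma, Finset.mem_range] at h
    simp only [List.take_append_drop, List.length_take, Sigma.mk.injEq, heq_eq_eq, true_and]
    omega
  · rintro ⟨p₁, p₂⟩ _
    simp

end Words

section Substitution

variable {R : Type*} [CommRing R] (B : List Bool → R)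

lemma substCoeff_eq_sum_words_length (A : List Bool → R) (w : List Bool) :
    substCoeff A B w = ∑ s ∈ words w.length, A s * mCoeff B s w := by
  rw [substCoeff, words, Finset.sum_biUnion]
  · refine Finset.sum_congr rfl fun n _ => ?_
    rw [Finset.sum_image fun f _ g _ h => List.ofFn_injective h]
  · intro m _ n _ hmn
    refine Finset.disjoint_left.mpr fun s hm hn => hmn ?_
    simp only [Finset.mem_image, Finset.mem_univ, true_and] at hm hn
    obtain ⟨f, rfl⟩ := hm
    obtain ⟨g, hg⟩ := hn
    simpa using (congrArg List.length hg).symm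

lemma substCoeff_eq_sum_words (hB0 : B [] = 0) (A : List Bool → R) {w : List Bool} {N : ℕ}
    (hN : w.length ≤ N) : substCoeff A B w = ∑ s ∈ words N, A s * mCoeff B s w := by
  rw [substCoeff_eq_sum_words_length]
  refine Finset.sum_subset (fun s hs => ?_) fun s _ hs => ?_
  · rw [mem_words] at hs ⊢
    omega
  · rw [mem_words, not_le] at hs
    rw [mCoeff_eq_zero_of_length_lt B hB0 hs, mul_zero]

lemma substCoeff_mul_substCoeff (hB0 : B [] = 0) (A A' : List Bool → R) {u v : List Bool}
    {N : ℕ} (hN : u.length + v.length ≤ N) :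
    substCoeff A B u * substCoeff A' B v
      = ∑ p ∈ wordPairs N, A p.1 * A' p.2 * (mCoeff B p.1 u * mCoeff B p.2 v) := by
  rw [substCoeff_eq_sum_words B hB0 A (N := N) (by omega),
    substCoeff_eq_sum_words B hB0 A' (N := N) (by omega), Finset.sum_mul_sum,
    ← Finset.sum_product', ← Finset.sum_subset (wordPairs_subset N)]
  · exact Finset.sum_congr rfl fun p _ => by ring
  · intro p _ hp
    rw [mem_wordPairs, not_le] at hp
    rcases (by omega : u.length < p.1.length ∨ v.length < p.2.length) with h | h
    · rw [mCoeff_eq_zero_of_length_lt B hB0 h]; ring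
    · rw [mCoeff_eq_zero_of_length_lt B hB0 h]; ring

@[simp] lemma substCoeff_ncOne : substCoeff ncOne B = ncOne := by
  ext w
  rw [substCoeff_eq_sum_words_length, Finset.sum_eq_single_of_mem [] (by simp)]
  · simp
  · rintro (_ | _) _ h
    · exact absurd rfl h
    · simp

lemma substCoeff_ncMul (hB0 : B [] = 0) (A A' : List Bool → R) :
    substCoeff (ncMul A A') B = ncMul (substCoeff A B) (substCoeff A' B) := by
  ext w
  have hL : substCoeff (ncMul A A') B w
      = ∑ p ∈ wordPairs w.length, A p.1 * A' p.2 * mCoeff B (p.1 ++ p.2) w := by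
    rw [substCoeff_eq_sum_words_length, ← sum_words_sum_take_drop]
    refine Finset.sum_congr rfl fun s _ => ?_
    simp only [ncMul, Finset.sum_mul, List.take_append_drop]
  have hR : ncMul (substCoeff A B) (substCoeff A' B) w
      = ∑ p ∈ wordPairs w.length, A p.1 * A' p.2 * ncMul (mCoeff B p.1) (mCoeff B p.2) w := by
    simp only [ncMul, Finset.mul_sum]
    rw [Finset.sum_comm]
    refine Finset.sum_congr rfl fun k hk => ?_
    rw [Finset.mem_range] at hk
    exact substCoeff_mul_substCoeff B hB0 A A' (by rw [List.length_take, List.length_drop]; omega)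
  rw [hL, hR]
  simp only [mCoeff_append]

end Substitution

section Shuffles

variable {α : Type*}

@[simp] lemma shuffles_nil_left (v : List α) : shuffles [] v = [v] := by
  rw [shuffles]

@[simp] lemma shuffles_nil_right (u : List α) : shuffles u [] = [u] := by
  cases u <;> rw [shuffles]

lemma shuffles_cons_cons (x y : α) (u v : List α) :
    shuffles (x :: u) (y :: v) =
      (shuffles u (y :: v)).map (x :: ·) ++ (shuffles (x :: u) v).map (y :: ·) := by
  rw [shuffles]

theorem length_eq_of_mem_shuffles :
    ∀ {u v w : List α}, w ∈ shuffles u v → w.length = u.length + v.length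
  | [], v, w, hw => by simp_all
  | x :: u, [], w, hw => by simp_all
  | x :: u, y :: v, w, hw => by
    rw [shuffles_cons_cons] at hw
    simp only [List.mem_append, List.mem_map] at hw
    rcases hw with ⟨w, hw, rfl⟩ | ⟨w, hw, rfl⟩
    all_goals simp only [List.length_cons, length_eq_of_mem_shuffles hw]; omega
termination_by u v => u.length + v.length

variable {R : Type*} [CommRing R]

def shuffleSum (P : List α → R) (u v : List α) : R := ((shuffles u v).map P).sum

@[simp] lemma shuffleSum_nil_left (P : List α → R) (v : List α) : shuffleSum P [] v = P v := by
  simp [shuffleSum]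

@[simp] lemma shuffleSum_nil_right (P : List α → R) (u : List α) : shuffleSum P u [] = P u := by
  simp [shuffleSum]

lemma shuffleSum_cons_cons (P : List α → R) (x y : α) (u v : List α) :
    shuffleSum P (x :: u) (y :: v) =
      shuffleSum (fun t => P (x :: t)) u (y :: v)
        + shuffleSum (fun t => P (y :: t)) (x :: u) v := by
  simp [shuffleSum, shuffles_cons_cons, Function.comp_def]

lemma shuffleSum_add (P Q : List α → R) (u v : List α) :
    shuffleSum (P + Q) u v = shuffleSum P u v + shuffleSum Q u v :=
  List.sum_map_add

lemma shuffleSum_const_mul (c : R) (P : List α → R) (u v : List α) :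
    shuffleSum (fun w => c * P w) u v = c * shuffleSum P u v :=
  List.sum_map_mul_left _ _ _

end Shuffles

section Coproduct

variable {R : Type*} [CommRing R]

-- Multiplication of the completed tensor square, in coefficients.
def ncMul₂ (X Y : List Bool → List Bool → R) (u v : List Bool) : R :=
  ∑ i ∈ Finset.range (u.length + 1), ∑ j ∈ Finset.range (v.length + 1),
    X (u.take i) (v.take j) * Y (u.drop i) (v.drop j)

lemma ncMul₂_add_left (X X' Y : List Bool → List Bool → R) (u v : List Bool) :
    ncMul₂ (X + X') Y u v = ncMul₂ X Y u v + ncMul₂ X' Y u v := by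
  simp only [ncMul₂, Pi.add_apply, add_mul, Finset.sum_add_distrib]

lemma ncMul₂_cons_left (X Y : List Bool → List Bool → R) (x : Bool) (u v : List Bool) :
    ncMul₂ X Y (x :: u) v
      = ∑ j ∈ Finset.range (v.length + 1), X [] (v.take j) * Y (x :: u) (v.drop j)
        + ncMul₂ (fun a b => X (x :: a) b) Y u v := by
  rw [ncMul₂, List.length_cons, Finset.sum_range_succ', add_comm]
  simp [ncMul₂]

lemma ncMul₂_cons_right (X Y : List Bool → List Bool → R) (u : List Bool) (y : Bool)
    (v : List Bool) :
    ncMul₂ X Y u (y :: v)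
      = ∑ i ∈ Finset.range (u.length + 1), X (u.take i) [] * Y (u.drop i) (y :: v)
        + ncMul₂ (fun a b => X a (y :: b)) Y u v := by
  simp only [ncMul₂, List.length_cons, Finset.sum_range_succ' _ (v.length + 1),
    ← Finset.sum_add_distrib]
  refine Finset.sum_congr rfl fun i _ => ?_
  simp [add_comm]

theorem shuffleSum_ncMul :
    ∀ (P Q : List Bool → R) (u v : List Bool),
      shuffleSum (ncMul P Q) u v = ncMul₂ (shuffleSum P) (shuffleSum Q) u v
  | P, Q, [], v => by simp [ncMul₂, ncMul]
  | P, Q, x :: u, [] => by simp [ncMul₂, ncMul]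
  | P, Q, x :: u, y :: v => by
    have hsplit : (fun a b => shuffleSum P (x :: a) (y :: b))
        = (fun a b => shuffleSum (fun t => P (x :: t)) a (y :: b))
          + (fun a b => shuffleSum (fun t => P (y :: t)) (x :: a) b) := by
      ext a b; exact shuffleSum_cons_cons P x y a b
    rw [shuffleSum_cons_cons, ncMul_comp_cons, ncMul_comp_cons, shuffleSum_add, shuffleSum_add,
      shuffleSum_const_mul, shuffleSum_const_mul, shuffleSum_ncMul _ Q u (y :: v),
      shuffleSum_ncMul _ Q (x :: u) v, ncMul₂_cons_right, ncMul₂_cons_left,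
      ncMul₂_cons_left, ncMul₂_cons_right (fun a b => shuffleSum P (x :: a) b), hsplit,
      ncMul₂_add_left, List.length_cons, Finset.sum_range_succ' _ (v.length + 1)]
    simp only [shuffleSum_nil_left, shuffleSum_nil_right, List.take_succ_cons,
      List.drop_succ_cons, List.take_zero, List.drop_zero]
    rw [shuffleSum_cons_cons Q]
    ring
termination_by _ _ u v => u.length + v.length

end Coproduct

section Deshuffles

variable {α : Type*}

def deshuffles : List α → List (List α × List α)
  | [] => [([], [])]
  | x :: s => (deshuffles s).map (Prod.map (x :: ·) id) ++ (deshuffles s).map (Prod.map id (x :: ·))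

lemma length_add_length_of_mem_deshuffles {s : List α} {p : List α × List α}
    (hp : p ∈ deshuffles s) : p.1.length + p.2.length = s.length := by
  induction s generalizing p with
  | nil => simp_all [deshuffles]
  | cons x s ih =>
    simp only [deshuffles, List.mem_append, List.mem_map] at hp
    rcases hp with ⟨q, hq, rfl⟩ | ⟨q, hq, rfl⟩ <;>
      simp only [Prod.map_fst, Prod.map_snd, id, List.length_cons, ← ih hq] <;> omega

variable [DecidableEq α]

@[simp] lemma count_nil_map_cons (x : α) (l : List (List α)) : (l.map (x :: ·)).count [] = 0 := by
  simp [List.count_eq_zero]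

@[simp] lemma count_cons_map_cons (x a : α) (w : List α) (l : List (List α)) :
    (l.map (x :: ·)).count (a :: w) = if x = a then l.count w else 0 := by
  split_ifs with h
  · subst h; exact List.count_map_of_injective _ _ List.cons_injective _
  · simp [List.count_eq_zero, h]

@[simp] lemma count_nil_map_prodMap_cons_id (x : α) (q : List α) (l : List (List α × List α)) :
    (l.map (Prod.map (x :: ·) id)).count ([], q) = 0 := by
  simp [List.count_eq_zero]

@[simp] lemma count_cons_map_prodMap_cons_id (x a : α) (w q : List α)
    (l : List (List α × List α)) :
    (l.map (Prod.map (x :: ·) id)).count (a :: w, q) = if x = a then l.count (w, q) else 0 := by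
  split_ifs with h
  · subst h
    exact List.count_map_of_injective _ _
      (Prod.map_injective.mpr ⟨List.cons_injective, Function.injective_id⟩) (w, q)
  · simp [List.count_eq_zero, h]

@[simp] lemma count_nil_map_prodMap_id_cons (x : α) (q : List α) (l : List (List α × List α)) :
    (l.map (Prod.map id (x :: ·))).count (q, []) = 0 := by
  simp [List.count_eq_zero]

@[simp] lemma count_cons_map_prodMap_id_cons (x a : α) (w q : List α)
    (l : List (List α × List α)) :
    (l.map (Prod.map id (x :: ·))).count (q, a :: w) = if x = a then l.count (q, w) else 0 := by
  split_ifs with h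
  · subst h
    exact List.count_map_of_injective _ _
      (Prod.map_injective.mpr ⟨Function.injective_id, List.cons_injective⟩) (q, w)
  · simp [List.count_eq_zero, h]

theorem count_deshuffles (s p₁ p₂ : List α) :
    (deshuffles s).count (p₁, p₂) = (shuffles p₁ p₂).count s := by
  induction s generalizing p₁ p₂ with
  | nil =>
    rcases p₁ with _ | ⟨a, p₁⟩ <;> rcases p₂ with _ | ⟨b, p₂⟩ <;>
      simp [deshuffles, shuffles_cons_cons]
  | cons x s ih =>
    rcases p₁ with _ | ⟨a, p₁⟩ <;> rcases p₂ with _ | ⟨b, p₂⟩ <;>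
      simp [deshuffles, shuffles_cons_cons, ih, List.count_cons] <;> grind

end Deshuffles

section Duality

variable {β M : Type*} [BEq β] [LawfulBEq β] [AddCommMonoid M]

lemma List.sum_map_eq_sum_count (l : List β) (f : β → M) {T : Finset β} (hT : ∀ x ∈ l, x ∈ T) :
    (l.map f).sum = ∑ x ∈ T, l.count x • f x := by
  classical
  obtain rfl : ‹BEq β› = instBEqOfDecidableEq := lawful_beq_subsingleton _ _
  rw [Finset.sum_list_map_count]
  refine Finset.sum_subset (fun x hx => hT x (List.mem_toFinset.mp hx)) fun x _ hx => ?_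
  rw [List.count_eq_zero.mpr (mt List.mem_toFinset.mpr hx), zero_smul]

variable {α R : Type*} [DecidableEq α] [CommRing R]

theorem sum_shuffleSum_mul_eq_sum_deshuffles (A : List α → R) (g : List α × List α → R)
    {S : Finset (List α)} {T : Finset (List α × List α)}
    (hS : ∀ p ∈ T, ∀ s ∈ shuffles p.1 p.2, s ∈ S) (hT : ∀ s ∈ S, ∀ p ∈ deshuffles s, p ∈ T) :
    ∑ p ∈ T, shuffleSum A p.1 p.2 * g p = ∑ s ∈ S, A s * ((deshuffles s).map g).sum := by
  rw [Finset.sum_congr rfl fun p hp => by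
      rw [shuffleSum, List.sum_map_eq_sum_count _ _ (hS p hp), Finset.sum_mul],
    Finset.sum_comm]
  refine Finset.sum_congr rfl fun s hs => ?_
  rw [List.sum_map_eq_sum_count _ _ (hT s hs), Finset.mul_sum]
  refine Finset.sum_congr rfl fun ⟨p₁, p₂⟩ _ => ?_
  rw [count_deshuffles, nsmul_eq_mul, nsmul_eq_mul]
  ring

end Duality

lemma Finset.sum_list_map_comm {ι β M : Type*} [AddCommMonoid M] (s : Finset ι) (l : List β)
    (f : ι → β → M) : ∑ i ∈ s, (l.map (f i)).sum = (l.map fun b => ∑ i ∈ s, f i b).sum := by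
  induction l with
  | nil => simp
  | cons b l ih => simp [Finset.sum_add_distrib, ih]

section Primitive

variable {R : Type*} [CommRing R]

lemma IsGroupLike.shuffleSum_eq {P : List Bool → R} (hP : IsGroupLike P) (u v : List Bool) :
    shuffleSum P u v = P u * P v :=
  (hP.2 u v).symm

lemma isGroupLike_ncOne : IsGroupLike (ncOne : List Bool → R) := by
  refine ⟨rfl, fun u v => ?_⟩
  rcases u with _ | ⟨x, u⟩
  · simp
  · refine (zero_mul _).trans (List.sum_eq_zero fun r hr => ?_).symm
    obtain ⟨w, hw, rfl⟩ := List.mem_map.mp hr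
    obtain _ | _ := w
    · have hlen := length_eq_of_mem_shuffles hw
      simp only [List.length_nil, List.length_cons] at hlen
      omega
    · rfl

lemma IsPrimitive.shuffleSum_eq {C : List Bool → R} (hC : IsPrimitive C) (a b : List Bool) :
    shuffleSum C a b = C a * ncOne b + ncOne a * C b := by
  rcases a with _ | ⟨x, a⟩ <;> rcases b with _ | ⟨y, b⟩
  · simp [hC.1]
  · simp
  · simp
  · simpa [shuffleSum] using hC.2 (x :: a) (y :: b) (List.cons_ne_nil _ _) (List.cons_ne_nil _ _)

lemma isPrimitive_ncLetter (a : Bool) : IsPrimitive (ncLetter a : List Bool → R) := by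
  refine ⟨rfl, fun u v hu hv => List.sum_eq_zero fun r hr => ?_⟩
  obtain ⟨w, hw, rfl⟩ := List.mem_map.mp hr
  have hlen : 2 ≤ w.length := by
    rw [length_eq_of_mem_shuffles hw]
    exact Nat.add_le_add (List.length_pos_iff.mpr hu) (List.length_pos_iff.mpr hv)
  have hne : w ≠ [a] := by
    rintro rfl
    simp at hlen
  simp [ncLetter, hne]

lemma isPrimitive_substLetter {B : List Bool → R} (hB : IsPrimitive B) (a : Bool) :
    IsPrimitive (substLetter B a) := by
  cases a
  exacts [isPrimitive_ncLetter false, hB]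

lemma sum_ncOne_take_mul (v : List Bool) (f : ℕ → R) :
    ∑ j ∈ Finset.range (v.length + 1), ncOne (v.take j) * f j = f 0 := by
  rw [Finset.sum_eq_single_of_mem 0 (by simp)]
  · simp
  · intro j hj hj0
    rcases v with _ | ⟨b, v⟩
    · simp_all
    · obtain ⟨j, rfl⟩ := Nat.exists_eq_succ_of_ne_zero hj0
      simp

lemma IsPrimitive.shuffleSum_ncMul {C : List Bool → R} (hC : IsPrimitive C)
    (M : List Bool → R) (u v : List Bool) :
    shuffleSum (ncMul C M) u v
      = ∑ i ∈ Finset.range (u.length + 1), C (u.take i) * shuffleSum M (u.drop i) v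
        + ∑ j ∈ Finset.range (v.length + 1), C (v.take j) * shuffleSum M u (v.drop j) := by
  have hsplit : shuffleSum C = (fun a b => C a * ncOne b) + (fun a b => ncOne a * C b) :=
    funext₂ hC.shuffleSum_eq
  rw [_root_.shuffleSum_ncMul, hsplit, ncMul₂_add_left, ncMul₂, ncMul₂]
  congr 1
  · refine Finset.sum_congr rfl fun i _ => ?_
    have h := sum_ncOne_take_mul v fun j => C (u.take i) * shuffleSum M (u.drop i) (v.drop j)
    rw [List.drop_zero] at h
    rw [← h]
    exact Finset.sum_congr rfl fun j _ => by ring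
  · rw [Finset.sum_comm]
    refine Finset.sum_congr rfl fun j _ => ?_
    have h := sum_ncOne_take_mul u fun i => C (v.take j) * shuffleSum M (u.drop i) (v.drop j)
    rw [List.drop_zero] at h
    rw [← h]
    exact Finset.sum_congr rfl fun i _ => by ring

end Primitive

section GroupLike

variable {R : Type*} [CommRing R] {B : List Bool → R}

theorem shuffleSum_mCoeff (hB : IsPrimitive B) (s u v : List Bool) :
    shuffleSum (mCoeff B s) u v
      = ((deshuffles s).map fun p => mCoeff B p.1 u * mCoeff B p.2 v).sum := by
  induction s generalizing u v with
  | nil => simp [deshuffles, isGroupLike_ncOne.shuffleSum_eq]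
  | cons a s ih =>
    rw [mCoeff_cons, (isPrimitive_substLetter hB a).shuffleSum_ncMul]
    simp only [ih, ← List.sum_map_mul_left, Finset.sum_list_map_comm, deshuffles, List.map_append,
      List.map_map, List.sum_append, Function.comp_def, Prod.map_fst, Prod.map_snd, id,
      mCoeff_cons]
    congr 1 <;> refine congrArg List.sum (List.map_congr_left fun p _ => ?_)
    · simp only [ncMul, Finset.sum_mul]
      exact Finset.sum_congr rfl fun i _ => by ring
    · simp only [ncMul, Finset.mul_sum]
      exact Finset.sum_congr rfl fun j _ => by ring

lemma shuffleSum_substCoeff (hB0 : B [] = 0) (A : List Bool → R) (u v : List Bool) :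
    shuffleSum (substCoeff A B) u v
      = ∑ s ∈ words (u.length + v.length), A s * shuffleSum (mCoeff B s) u v := by
  rw [shuffleSum, List.map_congr_left fun w hw =>
      substCoeff_eq_sum_words B hB0 A (length_eq_of_mem_shuffles hw).le,
    ← Finset.sum_list_map_comm]
  exact Finset.sum_congr rfl fun s _ => List.sum_map_mul_left _ _ _

theorem isGroupLike_substCoeff {A : List Bool → R} (hA : IsGroupLike A) (hB : IsPrimitive B) :
    IsGroupLike (substCoeff A B) := by
  refine ⟨by simp [substCoeff, hA.1], fun u v => ?_⟩
  set N := u.length + v.length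
  calc substCoeff A B u * substCoeff A B v
      = ∑ p ∈ wordPairs N, shuffleSum A p.1 p.2 * (mCoeff B p.1 u * mCoeff B p.2 v) := by
        rw [substCoeff_mul_substCoeff B hB.1 A A le_rfl]
        exact Finset.sum_congr rfl fun p _ => by rw [hA.shuffleSum_eq]
    _ = ∑ s ∈ words N, A s * shuffleSum (mCoeff B s) u v := by
        rw [sum_shuffleSum_mul_eq_sum_deshuffles]
        · exact Finset.sum_congr rfl fun s _ => by rw [shuffleSum_mCoeff hB]
        · intro p hp s hs
          rw [mem_words, length_eq_of_mem_shuffles hs]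
          exact mem_wordPairs.mp hp
        · intro s hs p hp
          rw [mem_wordPairs, length_add_length_of_mem_deshuffles hp]
          exact mem_words.mp hs
    _ = shuffleSum (substCoeff A B) u v := (shuffleSum_substCoeff hB.1 A u v).symm

end GroupLike

theorem stmt13_general {R : Type*} [CommRing R] (A B : List Bool → R)
    (hA : IsGroupLike A) (hB : IsPrimitive B) :
    IsGroupLike (substCoeff A B) ∧
      ∀ A' : List Bool → R,
        (∀ w, ncMul A A' w = if w = [] then 1 else 0) →
        (∀ w, ncMul A' A w = if w = [] then 1 else 0) →
        (∀ w, ncMul (substCoeff A B) (substCoeff A' B) w = if w = [] then 1 else 0) ∧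
        (∀ w, ncMul (substCoeff A' B) (substCoeff A B) w = if w = [] then 1 else 0) := by
  have substCoeff_inv : ∀ X Y : List Bool → R, ncMul X Y = ncOne →
      ncMul (substCoeff X B) (substCoeff Y B) = ncOne := fun X Y h => by
    rw [← substCoeff_ncMul B hB.1, h, substCoeff_ncOne]
  refine ⟨isGroupLike_substCoeff hA hB, fun A' hAA' hA'A => ⟨?_, ?_⟩⟩
  · exact congrFun (substCoeff_inv A A' (funext hAA'))
  · exact congrFun (substCoeff_inv A' A (funext hA'A))

/-- If `A` is group-like and `B` is primitive, then `A(e₀,B)` is group-like, and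
`A(e₀,B)⁻¹ = A⁻¹(e₀,B)`: for any two-sided inverse `A'` of `A` in the ring of
noncommutative series, `A'(e₀,B)` is a two-sided inverse of `A(e₀,B)`. -/
theorem stmt13 {R : Type*} [CommRing R] [Algebra ℚ R] (A B : List Bool → R)
    (hA : IsGroupLike A) (hB : IsPrimitive B) :
    IsGroupLike (substCoeff A B) ∧
      ∀ A' : List Bool → R,
        (∀ w, ncMul A A' w = if w = [] then 1 else 0) →
        (∀ w, ncMul A' A w = if w = [] then 1 else 0) →
        (∀ w, ncMul (substCoeff A B) (substCoeff A' B) w = if w = [] then 1 else 0) ∧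
        (∀ w, ncMul (substCoeff A' B) (substCoeff A B) w = if w = [] then 1 else 0) :=
  stmt13_general A B hA hB
end

section
/- Let $R$ be a commutative $\mathbb{Q}$-algebra and $P \in R\langle\langle e_0,e_1\rangle\rangle$ group-like with $P_{e_0} = 0$. Then for all $r \ge 1$, positive integers $n_0, n_1,\dots,n_r$: $P_{e_0^{n_r-1}e_1 \cdots e_0^{n_1-1}e_1 e_0^{n_0-1}} = \sum_{\substack{k_1,\dots,k_r \ge 0 \\ k_1+\cdots+k_r = n_0-1}} \prod_{i=1}^r \binom{-n_i}{k_i} \, P_{e_0^{n_r+k_r-1}e_1 \cdots e_0^{n_1+k_1-1}e_1}$, where $\binom{-n}{k} = (-1)^k \binom{k+n-1}{k}$. -/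
/-- The word `e₀^{m_r-1} e₁ ⋯ e₀^{m_1-1} e₁ e₀^t` on `{e₀, e₁}` (with `e₀ = false`,
`e₁ = true`), where `m : Fin r → ℕ` lists the exponents `m_1, …, m_r`. -/
def wrd (r : ℕ) (m : Fin r → ℕ) (t : ℕ) : List Bool :=
  (List.ofFn fun i : Fin r =>
      List.replicate (m (Fin.rev i) - 1) false ++ [true]).flatten
    ++ List.replicate t false

/-! Shuffling the letter `e₀` into a word `w` inserts it at each of the `|w| + 1` positions, so
`0 = P_{e₀} P_w` is a sum over these insertions. For `w = e₀^{a_r} e₁ ⋯ e₀^{a_1} e₁ e₀^t` it reads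
`(t + 1) P_{w e₀} = -∑ᵢ (aᵢ + 1) P_{w'ᵢ}`, where `w'ᵢ` is `w` with `aᵢ` raised by one: a recursion
lowering the tail exponent `t`. Over `ℚ` one may divide by `t + 1`, and induction on `t` gives the
formula, since the coefficients `∏ᵢ C(-(aᵢ + 1), kᵢ)` obey the same recursion by
`(k + 1) C(k + 1 + a, k + 1) = (a + 1) C(k + a + 1, k)`. -/

open Finset

theorem shuffles_singleton_left {α : Type*} (x : α) (ys : List α) :
    shuffles [x] ys = (List.range (ys.length + 1)).map (ys.insertIdx · x) := by
  induction ys with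
  | nil => simp [shuffles]
  | cons y ys ih =>
    rw [show shuffles [x] (y :: ys) = (x :: y :: ys) :: (shuffles [x] ys).map (y :: ·) by
      simp [shuffles], ih, List.length_cons, List.range_succ_eq_map (n := ys.length + 1)]
    simp [List.insertIdx_succ_cons]

theorem List.insertIdx_replicate_append {α : Type*} (x : α) {a i : ℕ} (h : i ≤ a)
    (ys : List α) :
    (List.replicate a x ++ ys).insertIdx i x = List.replicate (a + 1) x ++ ys := by
  induction i generalizing a with
  | zero => simp [List.replicate_succ]
  | succ i ih =>
    obtain ⟨b, rfl⟩ : ∃ b, a = b + 1 := ⟨a - 1, by omega⟩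
    rw [List.replicate_succ, List.cons_append, List.insertIdx_succ_cons, ih (by omega)]
    rfl

theorem List.insertIdx_append_length_add {α : Type*} (x : α) (xs ys : List α) (j : ℕ) :
    (xs ++ ys).insertIdx (xs.length + j) x = xs ++ ys.insertIdx j x := by
  induction xs with
  | nil => simp
  | cons z xs ih =>
    rw [List.length_cons, Nat.add_right_comm, List.cons_append, List.insertIdx_succ_cons, ih,
      List.cons_append]

theorem wrd_zero (m : Fin 0 → ℕ) (t : ℕ) : wrd 0 m t = List.replicate t false := by
  simp [wrd]

theorem wrd_succ_add_one (r : ℕ) (a : Fin (r + 1) → ℕ) (t : ℕ) :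
    wrd (r + 1) (a + 1) t
      = (List.replicate (a (Fin.last r)) false ++ [true]) ++ wrd r (Fin.init a + 1) t := by
  simp [wrd, List.ofFn_succ, Fin.rev_succ, Fin.init]

theorem Fin.init_pi_single_last {M : Type*} [Zero M] (r : ℕ) (x : M) :
    Fin.init (Pi.single (Fin.last r) x : Fin (r + 1) → M) = 0 := by
  ext i
  simp [Fin.init, Fin.castSucc_ne_last]

theorem Fin.init_pi_single_castSucc {M : Type*} [Zero M] {r : ℕ} (i : Fin r) (x : M) :
    Fin.init (Pi.single i.castSucc x : Fin (r + 1) → M) = Pi.single i x := by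
  ext j
  simp [Fin.init, Pi.single_apply]

theorem Fin.init_add {M : Type*} [Add M] {r : ℕ} (a b : Fin (r + 1) → M) :
    Fin.init (a + b) = Fin.init a + Fin.init b := rfl

theorem sum_insertIdx_false_wrd {M : Type*} [AddCommMonoid M] (r : ℕ) (a : Fin r → ℕ)
    (t : ℕ) (f : List Bool → M) :
    ∑ j ∈ range ((wrd r (a + 1) t).length + 1), f ((wrd r (a + 1) t).insertIdx j false)
      = (t + 1) • f (wrd r (a + 1) (t + 1))
        + ∑ i, (a i + 1) • f (wrd r (a + Pi.single i 1 + 1) t) := by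
  induction r generalizing f with
  | zero =>
    simp only [wrd_zero, List.length_replicate, univ_eq_empty, sum_empty, add_zero]
    rw [sum_congr rfl fun j hj => by
      rw [← List.append_nil (List.replicate t false),
        List.insertIdx_replicate_append _ (Nat.lt_succ_iff.mp (mem_range.mp hj)), List.append_nil],
      sum_const, card_range]
  | succ r ih =>
    rw [wrd_succ_add_one r a t]
    set pre := List.replicate (a (Fin.last r)) false ++ [true]
    set w := wrd r (Fin.init a + 1) t
    have hblock : ∀ j ∈ range (a (Fin.last r) + 1),
        f ((pre ++ w).insertIdx j false) = f (wrd (r + 1) (a + Pi.single (Fin.last r) 1 + 1) t) :=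
      fun j hj => by
        rw [wrd_succ_add_one, List.append_assoc,
          List.insertIdx_replicate_append _ (Nat.lt_succ_iff.mp (mem_range.mp hj))]
        simp [w, Fin.init_add, Fin.init_pi_single_last]
    have htail : ∀ j, (pre ++ w).insertIdx (a (Fin.last r) + 1 + j) false
        = pre ++ w.insertIdx j false := fun j => by
      rw [← List.insertIdx_append_length_add]
      simp [pre]
    have hlen : (pre ++ w).length + 1 = (a (Fin.last r) + 1) + (w.length + 1) := by
      simp [pre]; omega
    rw [hlen, sum_range_add, sum_congr rfl hblock, sum_const, card_range]
    simp only [htail]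
    rw [ih (Fin.init a) (fun u => f (pre ++ u)), Fin.sum_univ_castSucc]
    have hcast : ∀ i : Fin r, wrd (r + 1) (a + Pi.single i.castSucc 1 + 1) t
        = pre ++ wrd r (Fin.init a + Pi.single i 1 + 1) t := fun i => by
      rw [wrd_succ_add_one]
      simp [pre, Fin.init_add, Fin.init_pi_single_castSucc, Fin.castSucc_ne_last]
    rw [wrd_succ_add_one r a (t + 1)]
    simp only [hcast, Fin.init]
    abel

theorem IsGroupLike.succ_mul_wrd_succ {R : Type*} [CommRing R] {P : List Bool → R}
    (hP : IsGroupLike P) (hP0 : P [false] = 0) (r : ℕ) (a : Fin r → ℕ) (t : ℕ) :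
    ((t + 1 : ℕ) : R) * P (wrd r (a + 1) (t + 1))
      = -∑ i, ((a i + 1 : ℕ) : R) * P (wrd r (a + Pi.single i 1 + 1) t) := by
  have h : ∑ j ∈ range ((wrd r (a + 1) t).length + 1),
      P ((wrd r (a + 1) t).insertIdx j false) = 0 := by
    have h := hP.2 [false] (wrd r (a + 1) t)
    rw [hP0, zero_mul, shuffles_singleton_left, List.map_map] at h
    exact h.symm
  rw [sum_insertIdx_false_wrd] at h
  simp only [nsmul_eq_mul] at h
  exact eq_neg_of_add_eq_zero_left h

/-- `∏ᵢ C(-(aᵢ + 1), kᵢ)`, where `C(-n, k) = (-1)^k C(k + n - 1, k)`. -/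
def prodNegChoose {R : Type*} [CommRing R] {r : ℕ} (a k : Fin r → ℕ) : R :=
  ∏ i, (-1) ^ k i * ((k i + a i).choose (k i) : R)

theorem succ_mul_prodNegChoose_add_single {R : Type*} [CommRing R] {r : ℕ}
    (a k : Fin r → ℕ) (i : Fin r) :
    ((k i + 1 : ℕ) : R) * prodNegChoose a (k + Pi.single i 1)
      = -(((a i + 1 : ℕ) : R) * prodNegChoose (a + Pi.single i 1) k) := by
  set Q := ∏ j ∈ {i}ᶜ, (-1 : R) ^ k j * ((k j + a j).choose (k j) : R)
  have hleft : prodNegChoose a (k + Pi.single i 1)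
      = (-1) ^ (k i + 1) * ((k i + 1 + a i).choose (k i + 1) : R) * Q := by
    rw [prodNegChoose, Fintype.prod_eq_mul_prod_compl i]
    refine congr_arg₂ _ (by simp) (prod_congr rfl fun j hj => ?_)
    simp [Pi.single_eq_of_ne (by simpa using hj : j ≠ i)]
  have hright : prodNegChoose (a + Pi.single i 1) k
      = (-1) ^ k i * ((k i + (a i + 1)).choose (k i) : R) * Q := by
    rw [prodNegChoose, Fintype.prod_eq_mul_prod_compl i]
    refine congr_arg₂ _ (by simp) (prod_congr rfl fun j hj => ?_)
    simp [Pi.single_eq_of_ne (by simpa using hj : j ≠ i)]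
  have hchoose : ((k i + 1 : ℕ) : R) * ((k i + 1 + a i).choose (k i + 1) : R)
      = ((a i + 1 : ℕ) : R) * ((k i + (a i + 1)).choose (k i) : R) := by
    norm_cast
    have h := Nat.choose_succ_right_eq (k i + a i + 1) (k i)
    rw [show k i + a i + 1 - k i = a i + 1 by omega] at h
    rw [show k i + 1 + a i = k i + a i + 1 by ring, show k i + (a i + 1) = k i + a i + 1 by ring]
    rw [mul_comm, h, mul_comm]
  rw [hleft, hright, pow_succ]
  linear_combination (-(-1 : R) ^ k i * Q) * hchoose

theorem sum_antidiagonalTuple_succ_apply_smul {M : Type*} [AddCommMonoid M] (r t : ℕ)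
    (i : Fin r) (F : (Fin r → ℕ) → M) :
    ∑ k ∈ Finset.Nat.antidiagonalTuple r (t + 1), k i • F k
      = ∑ k ∈ Finset.Nat.antidiagonalTuple r t, (k i + 1) • F (k + Pi.single i 1) := by
  have hcancel : ∀ k : Fin r → ℕ, k i ≠ 0 → k - Pi.single i 1 + Pi.single i 1 = k := by
    intro k hk
    refine tsub_add_cancel_of_le fun j => ?_
    rcases eq_or_ne j i with rfl | hj
    · simpa [Nat.one_le_iff_ne_zero] using hk
    · simp [Pi.single_eq_of_ne hj]
  rw [← sum_filter_of_ne (p := fun k => k i ≠ 0) fun k _ hk h => hk (by rw [h, zero_smul])]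
  symm
  refine sum_nbij' (· + Pi.single i 1) (· - Pi.single i 1) (fun k hk => ?_) (fun k hk => ?_)
    (fun k _ => add_tsub_cancel_right k _) (fun k hk => ?_) (fun k _ => by simp)
  · simp_all [Finset.Nat.mem_antidiagonalTuple, sum_add_distrib]
  · simp only [mem_filter, Finset.Nat.mem_antidiagonalTuple] at hk ⊢
    have h := congr_arg (∑ j, · j) (hcancel k hk.2)
    simp only [Pi.add_apply, sum_add_distrib, sum_pi_single', mem_univ, if_true] at h
    omega
  · exact hcancel k (mem_filter.mp hk).2

theorem eq_sum_antidiagonalTuple_of_succ_mul_eq {R : Type*} [CommRing R] [Algebra ℚ R]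
    {r : ℕ} (W : (Fin r → ℕ) → ℕ → R)
    (hW : ∀ a t, ((t + 1 : ℕ) : R) * W a (t + 1)
      = -∑ i, ((a i + 1 : ℕ) : R) * W (a + Pi.single i 1) t)
    (a : Fin r → ℕ) (t : ℕ) :
    W a t = ∑ k ∈ Finset.Nat.antidiagonalTuple r t, prodNegChoose a k * W (a + k) 0 := by
  induction t generalizing a with
  | zero => simp [Finset.Nat.antidiagonalTuple_zero_right, prodNegChoose]
  | succ t ih =>
    have hunit : IsUnit ((t + 1 : ℕ) : R) := by
      simpa using (Nat.cast_add_one_ne_zero (R := ℚ) t).isUnit.map (algebraMap ℚ R)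
    refine hunit.mul_left_cancel ?_
    calc ((t + 1 : ℕ) : R) * W a (t + 1)
        = -∑ i, ((a i + 1 : ℕ) : R) * ∑ k ∈ Finset.Nat.antidiagonalTuple r t,
            prodNegChoose (a + Pi.single i 1) k * W (a + Pi.single i 1 + k) 0 := by
          simp only [hW, ← ih]
      _ = ∑ i, ∑ k ∈ Finset.Nat.antidiagonalTuple r t,
            (k i + 1) • (prodNegChoose a (k + Pi.single i 1) * W (a + (k + Pi.single i 1)) 0) := by
          simp only [mul_sum, ← sum_neg_distrib]
          refine sum_congr rfl fun i _ => sum_congr rfl fun k _ => ?_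
          rw [nsmul_eq_mul, show a + (k + Pi.single i 1) = a + Pi.single i 1 + k by abel]
          linear_combination
            -W (a + Pi.single i 1 + k) 0 * succ_mul_prodNegChoose_add_single (R := R) a k i
      _ = ∑ i, ∑ k ∈ Finset.Nat.antidiagonalTuple r (t + 1),
            k i • (prodNegChoose a k * W (a + k) 0) := by
          simp only [sum_antidiagonalTuple_succ_apply_smul]
      _ = ∑ k ∈ Finset.Nat.antidiagonalTuple r (t + 1),
            ((t + 1 : ℕ) : R) * (prodNegChoose a k * W (a + k) 0) := by
          rw [sum_comm]
          refine sum_congr rfl fun k hk => ?_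
          rw [← sum_smul, (Finset.Nat.mem_antidiagonalTuple.mp hk), nsmul_eq_mul]
      _ = _ := (mul_sum _ _ _).symm

theorem stmt14_general {R : Type*} [CommRing R] [Algebra ℚ R] (P : List Bool → R)
    (hP : IsGroupLike P) (hP0 : P [false] = 0)
    (r : ℕ) (n : Fin (r + 1) → ℕ) (hn : ∀ i, 1 ≤ n i) :
    P (wrd r (fun i => n i.succ) (n 0 - 1))
      = ∑ k ∈ Finset.Nat.antidiagonalTuple r (n 0 - 1),
          (∏ i, (-1 : R) ^ (k i) * (Nat.choose (k i + n i.succ - 1) (k i) : R)) *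
            P (wrd r (fun i => n i.succ + k i) 0) := by
  set a : Fin r → ℕ := fun i => n i.succ - 1
  have hsub : ∀ i, n i.succ = a i + 1 := fun i => (Nat.sub_add_cancel (hn i.succ)).symm
  have hna : (fun i => n i.succ) = a + 1 := funext hsub
  rw [hna, eq_sum_antidiagonalTuple_of_succ_mul_eq (fun a t => P (wrd r (a + 1) t))
    (hP.succ_mul_wrd_succ hP0 r) a]
  refine sum_congr rfl fun k _ => ?_
  congr 1
  · exact prod_congr rfl fun i _ => by rw [hsub, ← add_assoc, Nat.add_sub_cancel]
  · congr 2
    funext i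
    simp only [Pi.add_apply, Pi.one_apply, hsub, add_right_comm]

/-- For a group-like `P` with `P_{e₀} = 0`, and positive integers `n₀, n₁, …, n_r`
(`r ≥ 1`):
`P_{e₀^{n_r-1}e₁ ⋯ e₀^{n_1-1}e₁ e₀^{n₀-1}}
  = ∑_{k₁+⋯+k_r = n₀-1} ∏ᵢ C(-nᵢ, kᵢ) · P_{e₀^{n_r+k_r-1}e₁ ⋯ e₀^{n_1+k_1-1}e₁}`,
where `C(-n, k) = (-1)^k C(k+n-1, k)`. -/
theorem stmt14 {R : Type*} [CommRing R] [Algebra ℚ R] (P : List Bool → R)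
    (hP : IsGroupLike P) (hP0 : P [false] = 0)
    (r : ℕ) (hr : 1 ≤ r) (n : Fin (r + 1) → ℕ) (hn : ∀ i, 1 ≤ n i) :
    P (wrd r (fun i => n i.succ) (n 0 - 1))
      = ∑ k ∈ Finset.Nat.antidiagonalTuple r (n 0 - 1),
          (∏ i, (-1 : R) ^ (k i) * (Nat.choose (k i + n i.succ - 1) (k i) : R)) *
            P (wrd r (fun i => n i.succ + k i) 0) :=
  stmt14_general P hP hP0 r n hn
end
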